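/- Let $k \in \mathbb{N}$ be odd and $h \in \mathbb{Z}$ with $\gcd(h,k)=1$. Then the Hardy sum $s_3(h,k) = \sum_{a=0}^{k-1} (-1)^a ((ah/k))$ satisfies $s_3(h,k) = \frac{1}{2k} \sum_{a=1}^{k-1} \tan(\pi a h/k) \cot(\pi a/k)$. -/

import Mathlib

open scoped Classical

/-- The sawtooth function `((x))`. -/
noncomputable def saw (x : ℝ) : ℝ :=
  if ∃ m : ℤ, x = m then 0 else Int.fract x - 1 / 2

/-- The cotangent function. -/
noncomputable def cot (x : ℝ) : ℝ := Real.cos x / Real.sin x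

/-!
Eisenstein's finite Fourier expansion
`((n / k)) = -(1 / 2k) ∑_{m=1}^{k-1} cot (π m / k) sin (2π m n / k)`
turns `s₃(h, k)` into a double sum. After swapping the sums, the inner alternating sum
`∑_{a<k} (-1)^a sin (2π a m h / k)` telescopes against `2 cos (π m h / k)`; as `k` is odd,
`(-1)^k = -1` and `cos (π m h / k) ≠ 0`, so it equals `-tan (π m h / k)`.

The expansion itself comes from `cos θ sin 2jθ = sin θ ∑_{l<j} (cos 2lθ + cos 2(l+1)θ)` and the
vanishing of `∑_{m<k} cos (2π l m / k)` for `k ∤ l`, which give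
`∑_{m=1}^{k-1} cot (π m / k) sin (2π m j / k) = k - 2j` for `0 < j < k`.
-/

open Finset
open Real hiding cot

theorem saw_add_intCast (x : ℝ) (m : ℤ) : saw (x + m) = saw x := by
  have hint : (∃ n : ℤ, x + m = n) ↔ ∃ n : ℤ, x = n :=
    ⟨fun ⟨n, hn⟩ => ⟨n - m, by push_cast; linarith⟩,
      fun ⟨n, hn⟩ => ⟨n + m, by push_cast; linarith⟩⟩
  simp only [saw, hint, Int.fract_add_intCast]

theorem saw_zero : saw 0 = 0 := if_pos ⟨0, by simp⟩

theorem saw_eq_sub_half_of_mem_Ioo {x : ℝ} (hx : x ∈ Set.Ioo 0 1) : saw x = x - 1 / 2 := by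
  have hx' : ¬ ∃ m : ℤ, x = m := by
    rintro ⟨m, rfl⟩
    have h0 : (0 : ℤ) < m := by exact_mod_cast hx.1
    have h1 : m < 1 := by exact_mod_cast hx.2
    omega
  rw [saw, if_neg hx', Int.fract_eq_self.mpr ⟨hx.1.le, hx.2⟩]

theorem cos_mul_sin_two_mul_natCast_mul (θ : ℝ) (j : ℕ) :
    cos θ * sin (2 * j * θ) = sin θ * ∑ l ∈ range j, (cos (2 * l * θ) + cos (2 * (l + 1) * θ)) := by
  induction j with
  | zero => simp
  | succ j ih =>
    have e1 : 2 * ((j + 1 : ℕ) : ℝ) * θ = (2 * j + 1) * θ + θ := by push_cast; ring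
    have e2 : 2 * (j : ℝ) * θ = (2 * j + 1) * θ - θ := by ring
    have e3 : 2 * ((j : ℝ) + 1) * θ = (2 * j + 1) * θ + θ := by ring
    rw [sum_range_succ, mul_add, ← ih, e1, e2, e3, sin_add, sin_sub, cos_add, cos_sub]
    ring

theorem sum_range_cos_two_pi_mul_div (k : ℕ) (l : ℤ) :
    ∑ m ∈ range k, cos (2 * π * l * m / k) = if (k : ℤ) ∣ l then (k : ℝ) else 0 := by
  rcases Nat.eq_zero_or_pos k with rfl | hk
  · simp
  have hk0 : (k : ℝ) ≠ 0 := by positivity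
  split_ifs with hl
  · obtain ⟨q, rfl⟩ := hl
    have hcos : ∀ m : ℕ, cos (2 * π * ((k * q : ℤ) : ℝ) * m / k) = 1 := fun m => by
      rw [← cos_int_mul_two_pi (q * m)]
      congr 1; push_cast; field_simp
    rw [sum_congr rfl fun m _ => hcos m]
    simp
  set z : ℂ := Complex.exp (2 * π * l / k * Complex.I)
  have hz : ∀ m : ℕ, z ^ m = Complex.exp ((2 * π * l * m / k : ℝ) * Complex.I) := fun m => by
    rw [← Complex.exp_nat_mul]; push_cast; ring_nf
  have hz1 : z ≠ 1 := by
    rw [Ne, Complex.exp_eq_one_iff]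
    rintro ⟨q, hq⟩
    have hq' : (2 * π * l / k : ℝ) = q * (2 * π) := by
      simpa using congrArg Complex.im hq
    apply hl
    refine ⟨q, ?_⟩
    have : (l : ℝ) = k * q := by field_simp at hq'; nlinarith [pi_pos]
    exact_mod_cast this
  have hzk : z ^ k = 1 := by
    have hturn : (2 * π * l * k / k : ℝ) = l * (2 * π) := by field_simp
    rw [hz, hturn, ← Complex.exp_int_mul_two_pi_mul_I l]
    push_cast; ring_nf
  calc ∑ m ∈ range k, cos (2 * π * l * m / k) = (∑ m ∈ range k, z ^ m).re := by
        simp only [Complex.re_sum, hz, Complex.exp_ofReal_mul_I_re]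
    _ = 0 := by rw [geom_sum_eq hz1, hzk]; simp

theorem sum_range_eq_add_sum_Icc_one_pred {M : Type*} [AddCommMonoid M] {k : ℕ} (hk : 0 < k)
    (f : ℕ → M) : ∑ m ∈ range k, f m = f 0 + ∑ m ∈ Icc 1 (k - 1), f m := by
  rw [range_eq_Ico, sum_eq_sum_Ico_succ_bot hk,
    Icc_sub_one_right_eq_Ico_of_not_isMin (by simpa using hk.ne')]

theorem sin_pi_mul_div_ne_zero {m k : ℕ} (hm : 0 < m) (hmk : m < k) : sin (π * m / k) ≠ 0 := by
  have hm0 : (0 : ℝ) < m := by exact_mod_cast hm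
  have hmk' : (m : ℝ) < k := by exact_mod_cast hmk
  apply (sin_pos_of_pos_of_lt_pi (div_pos (mul_pos pi_pos hm0) (hm0.trans hmk')) _).ne'
  rw [div_lt_iff₀ (hm0.trans hmk')]
  nlinarith [pi_pos]

theorem sum_Icc_cot_mul_sin_two_pi_mul_div {k j : ℕ} (hj : 0 < j) (hjk : j < k) :
    ∑ m ∈ Icc 1 (k - 1), cot (π * m / k) * sin (2 * π * m * j / k) = k - 2 * j := by
  set D : ℕ → ℝ := fun m => ∑ l ∈ range j,
    (cos (2 * π * (l : ℤ) * m / k) + cos (2 * π * ((l + 1 : ℕ) : ℤ) * m / k))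
  have hpt : ∀ m ∈ Icc 1 (k - 1), cot (π * m / k) * sin (2 * π * m * j / k) = D m := by
    intro m hm
    rw [mem_Icc] at hm
    have hs := sin_pi_mul_div_ne_zero hm.1 (by omega : m < k)
    have key := cos_mul_sin_two_mul_natCast_mul (π * m / k) j
    have hsin : 2 * π * m * j / k = 2 * j * (π * m / k) := by ring
    have hD : D m = ∑ l ∈ range j,
        (cos (2 * l * (π * m / k)) + cos (2 * (l + 1) * (π * m / k))) :=
      sum_congr rfl fun l _ => by push_cast; congr 2 <;> ring
    rw [cot, div_mul_eq_mul_div, div_eq_iff hs, hsin, key, hD, mul_comm]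
  have hD0 : D 0 = 2 * j := by simp [D]; ring
  have hDsum : ∑ m ∈ range k, D m = k := by
    have hndvd : ∀ l : ℕ, 0 < l → l < k → ¬ (k : ℤ) ∣ l := fun l hl0 hlk hkl =>
      absurd (Nat.le_of_dvd hl0 (Int.natCast_dvd_natCast.mp hkl)) (by omega)
    obtain ⟨i, rfl⟩ := Nat.exists_eq_add_one_of_ne_zero hj.ne'
    simp only [D]
    rw [sum_comm, sum_range_succ']
    simp only [sum_add_distrib, sum_range_cos_two_pi_mul_div]
    rw [sum_eq_zero fun l hl => if_neg (hndvd _ l.succ_pos (by simp at hl; omega)),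
      sum_eq_zero fun l hl => if_neg (hndvd _ (by omega) (by simp at hl; omega)),
      if_neg (hndvd 1 one_pos (by omega))]
    simp
  rw [sum_congr rfl hpt]
  have := sum_range_eq_add_sum_Icc_one_pred (hj.trans hjk) D
  linarith

theorem saw_intCast_div_eq_sum {k : ℕ} (hk : 0 < k) (n : ℤ) :
    saw (n / k) = -(1 / (2 * k)) *
      ∑ m ∈ Icc 1 (k - 1), cot (π * m / k) * sin (2 * π * m * n / k) := by
  have hk0 : (k : ℝ) ≠ 0 := by positivity
  obtain ⟨r, hrk, q, rfl⟩ : ∃ r : ℕ, r < k ∧ ∃ q : ℤ, n = r + k * q := by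
    have h0 : 0 ≤ n % k := Int.emod_nonneg n (by omega)
    have h1 : n % k < k := Int.emod_lt_of_pos n (by omega)
    exact ⟨(n % k).toNat, by omega, n / k, by have := Int.emod_add_mul_ediv n k; omega⟩
  have hsaw : saw ((r + k * q : ℤ) / k) = saw (r / k) := by
    have : ((r + k * q : ℤ) : ℝ) / k = r / k + q := by push_cast; field_simp
    rw [this, saw_add_intCast]
  have hsin : ∀ m : ℕ, sin (2 * π * m * (r + k * q : ℤ) / k) = sin (2 * π * m * r / k) := by
    intro m
    have : 2 * π * m * ((r + k * q : ℤ) : ℝ) / k = 2 * π * m * r / k + (m * q : ℤ) * (2 * π) := by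
      push_cast; field_simp
    rw [this, sin_add_int_mul_two_pi]
  simp only [hsaw, hsin]
  rcases Nat.eq_zero_or_pos r with rfl | hr
  · simp [saw_zero]
  have hrk' : (r : ℝ) / k < 1 := (div_lt_one (by positivity)).mpr (by exact_mod_cast hrk)
  rw [saw_eq_sub_half_of_mem_Ioo ⟨by positivity, hrk'⟩, sum_Icc_cot_mul_sin_two_pi_mul_div hr hrk]
  field_simp
  ring

theorem two_mul_cos_half_mul_sum_range_neg_one_pow_mul_sin (θ : ℝ) (k : ℕ) :
    2 * cos (θ / 2) * ∑ a ∈ range k, (-1) ^ a * sin (a * θ)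
      = -sin (θ / 2) - (-1) ^ k * sin (k * θ - θ / 2) := by
  induction k with
  | zero => simp
  | succ k ih =>
    have e : ((k + 1 : ℕ) : ℝ) * θ - θ / 2 = k * θ + θ / 2 := by push_cast; ring
    rw [sum_range_succ, mul_add, ih, e, pow_succ, sin_add, sin_sub]
    ring

theorem cos_pi_mul_div_ne_zero_of_odd {k : ℕ} (hk : Odd k) (n : ℤ) : cos (π * n / k) ≠ 0 := by
  rw [Ne, cos_eq_zero_iff]
  rintro ⟨m, hm⟩
  have hk0 : (k : ℝ) ≠ 0 := by exact_mod_cast hk.pos.ne'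
  have h2n : ((2 * n : ℤ) : ℝ) = ((2 * m + 1) * k : ℤ) := by
    push_cast; field_simp at hm; nlinarith [pi_pos]
  have hodd : Odd ((2 * m + 1) * k : ℤ) := (odd_two_mul_add_one m).mul (by exact_mod_cast hk)
  exact Int.not_even_iff_odd.mpr hodd (Int.cast_injective h2n ▸ even_two_mul n)

theorem sum_range_neg_one_pow_mul_sin_two_pi_mul_div {k : ℕ} (hk : Odd k) (n : ℤ) :
    ∑ a ∈ range k, (-1) ^ a * sin (2 * π * a * n / k) = -tan (π * n / k) := by
  have hk0 : (k : ℝ) ≠ 0 := by exact_mod_cast hk.pos.ne'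
  have key := two_mul_cos_half_mul_sum_range_neg_one_pow_mul_sin (2 * π * n / k) k
  have hhalf : 2 * π * n / k / 2 = π * n / k := by ring
  have hwind : k * (2 * π * n / k) - π * n / k = -(π * n / k) + n * (2 * π) := by
    field_simp; ring
  rw [hhalf, hwind, sin_add_int_mul_two_pi, sin_neg, hk.neg_one_pow] at key
  have hcos := cos_pi_mul_div_ne_zero_of_odd hk n
  have hsum : ∑ a ∈ range k, (-1) ^ a * sin (2 * π * a * n / k)
      = ∑ a ∈ range k, (-1) ^ a * sin (a * (2 * π * n / k)) :=
    sum_congr rfl fun a _ => by ring_nf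
  rw [tan_eq_sin_div_cos, ← neg_div, eq_div_iff hcos, hsum]
  linear_combination key / 2

theorem hardy_s3_general (k : ℕ) (hko : Odd k) (h : ℤ) :
    ∑ a ∈ Finset.range k, (-1 : ℝ) ^ a * saw (a * (h : ℝ) / k)
      = 1 / (2 * k) *
          ∑ a ∈ Finset.Icc 1 (k - 1),
            Real.tan (Real.pi * a * (h : ℝ) / k) * cot (Real.pi * a / k) := by
  have hsaw : ∀ a : ℕ, saw (a * h / k) = -(1 / (2 * k)) *
      ∑ m ∈ Icc 1 (k - 1), cot (π * m / k) * sin (2 * π * a * (m * h : ℤ) / k) := by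
    intro a
    have := saw_intCast_div_eq_sum hko.pos (a * h)
    push_cast at this ⊢
    rw [this]
    congr 1
    exact sum_congr rfl fun m _ => by ring_nf
  have halt : ∀ m : ℕ, ∑ a ∈ range k, (-1) ^ a * sin (2 * π * a * (m * h : ℤ) / k)
      = -tan (π * m * h / k) := by
    intro m
    rw [sum_range_neg_one_pow_mul_sin_two_pi_mul_div hko]
    push_cast
    ring_nf
  calc _ = ∑ m ∈ Icc 1 (k - 1), -(1 / (2 * k)) * cot (π * m / k) *
        ∑ a ∈ range k, (-1) ^ a * sin (2 * π * a * (m * h : ℤ) / k) := by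
        simp_rw [hsaw, mul_sum]
        rw [sum_comm]
        exact sum_congr rfl fun m _ => sum_congr rfl fun a _ => by ring
    _ = _ := by
        simp_rw [halt, mul_sum]
        exact sum_congr rfl fun m _ => by ring

theorem hardy_s3 (k : ℕ) (hk : 0 < k) (hko : Odd k) (h : ℤ) (hco : Int.gcd h k = 1) :
    ∑ a ∈ Finset.range k, (-1 : ℝ) ^ a * saw (a * (h : ℝ) / k)
      = 1 / (2 * k) *
          ∑ a ∈ Finset.Icc 1 (k - 1),
            Real.tan (Real.pi * a * (h : ℝ) / k) * cot (Real.pi * a / k) :=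
  hardy_s3_general k hko h
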